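/- arXiv:1305.1182 — 3 statements merged into one kernel-verified Lean document; each statement's English description precedes it below -/
import Mathlib

section
/- Let K be a field, V a finite-dimensional K-vector space and φ : V → V a linear endomorphism that is partially semisimple, i.e. such that the map Ker(φ − 1) → Coker(φ − 1) induced by the identity of V is bijective. Let W ⊆ V be a linear subspace with φ(W) ⊆ W. Then the restriction φ|_W : W → W is partially semisimple, i.e. the map Ker(φ|_W − 1) → Coker(φ|_W − 1) induced by the identity of W is bijective. -/
/-- For an endomorphism of a finite-dimensional space, the induced map
`ker f → U ⧸ range f` is bijective as soon as it is injective, since the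
two spaces have equal dimension by rank-nullity. -/
private lemma aux_bijective_of_injective {K U : Type*} [Field K] [AddCommGroup U] [Module K U]
    [FiniteDimensional K U] (f : U →ₗ[K] U)
    (h : Function.Injective ((LinearMap.range f).mkQ ∘ₗ (LinearMap.ker f).subtype)) :
    Function.Bijective ((LinearMap.range f).mkQ ∘ₗ (LinearMap.ker f).subtype) := by
  refine ⟨h, ?_⟩
  have h1 := LinearMap.finrank_range_add_finrank_ker f
  have h2 := Submodule.finrank_quotient_add_finrank (LinearMap.range f)
  have heq : Module.finrank K (LinearMap.ker f) =
      Module.finrank K (U ⧸ LinearMap.range f) := by omega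
  exact (LinearMap.injective_iff_surjective_of_finrank_eq_finrank heq).mp h

/-- If a linear endomorphism `φ` of a finite-dimensional vector space `V` is partially
semisimple (the map `Ker(φ - 1) → Coker(φ - 1)` induced by the identity is bijective),
then so is its restriction to any `φ`-invariant subspace `W ⊆ V`. -/
theorem partiallySemisimple_restrict
    {K V : Type*} [Field K] [AddCommGroup V] [Module K V] [FiniteDimensional K V]
    (φ : V →ₗ[K] V)
    (hps : Function.Bijective
      ((LinearMap.range (φ - LinearMap.id)).mkQ ∘ₗ
        (LinearMap.ker (φ - LinearMap.id)).subtype))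
    (W : Submodule K V) (hW : ∀ x ∈ W, φ x ∈ W) :
    Function.Bijective
      ((LinearMap.range (φ.restrict hW - LinearMap.id)).mkQ ∘ₗ
        (LinearMap.ker (φ.restrict hW - LinearMap.id)).subtype) := by
  set f := φ - LinearMap.id with hf
  set g := φ.restrict hW - LinearMap.id with hg
  have hcoe : ∀ x : W, ((g x : W) : V) = f (x : V) := by
    intro x
    simp [hg, hf, LinearMap.restrict_apply]
  apply aux_bijective_of_injective
  rw [injective_iff_map_eq_zero]
  intro a ha
  -- `a.1 ∈ range g`
  have hrange : (a : W) ∈ LinearMap.range g := by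
    simpa [Submodule.Quotient.mk_eq_zero] using ha
  obtain ⟨w, hw⟩ := hrange
  have hkerV : ((a : W) : V) ∈ LinearMap.ker f := by
    rw [LinearMap.mem_ker, ← hcoe (a : W)]
    have : g (a : W) = 0 := a.2
    rw [this]; rfl
  have hrangeV : ((a : W) : V) ∈ LinearMap.range f := by
    refine ⟨(w : V), ?_⟩
    rw [← hcoe w, hw]
  -- use injectivity on `V`
  have h0 : (⟨((a : W) : V), hkerV⟩ : LinearMap.ker f) = 0 := by
    apply hps.1
    simp only [LinearMap.coe_comp, Function.comp_apply, Submodule.coe_subtype,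
      Submodule.mkQ_apply, map_zero]
    rw [Submodule.Quotient.mk_eq_zero]
    · exact hrangeV
  have hval : ((a : W) : V) = 0 := congrArg Subtype.val h0
  exact Subtype.ext (Subtype.ext hval)
end

section
/- Let K be a field, let V and M be finite-dimensional K-vector spaces equipped with linear endomorphisms φ_V : V → V and φ_M : M → M, and let r : V → M be a linear map satisfying r ∘ φ_V = φ_M ∘ r. Assume that (φ_V − 1) restricted to Ker(r) is surjective onto Ker(r), and that φ_M is partially semisimple, i.e. the map Ker(φ_M − 1) → Coker(φ_M − 1) induced by the identity of M is bijective. Then the linear map Coker(φ_V − 1) → Coker(φ_M − 1) induced by r (that is, the map V/Im(φ_V − 1) → M/Im(φ_M − 1) induced by r) is injective. -/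
/-- Let `r : V → M` be a linear map between finite-dimensional vector spaces,
equivariant with respect to endomorphisms `φV` of `V` and `φM` of `M`. If `φV - 1`
maps `Ker(r)` onto `Ker(r)` and `φM` is partially semisimple (the map
`Ker(φM - 1) → Coker(φM - 1)` induced by the identity is bijective), then the map
`Coker(φV - 1) → Coker(φM - 1)` induced by `r` is injective. -/
theorem coker_map_injective
    {K V M : Type*} [Field K] [AddCommGroup V] [Module K V] [FiniteDimensional K V]
    [AddCommGroup M] [Module K M] [FiniteDimensional K M]
    (φV : V →ₗ[K] V) (φM : M →ₗ[K] M) (r : V →ₗ[K] M)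
    (hcomm : r ∘ₗ φV = φM ∘ₗ r)
    (hker : ∀ x : V, r x = 0 → ∃ y : V, r y = 0 ∧ (φV - (LinearMap.id : V →ₗ[K] V)) y = x)
    (hps : Function.Bijective
      ((LinearMap.range (φM - LinearMap.id)).mkQ ∘ₗ
        (LinearMap.ker (φM - LinearMap.id)).subtype)) :
    Function.Injective
      (Submodule.mapQ (LinearMap.range (φV - LinearMap.id))
        (LinearMap.range (φM - LinearMap.id)) r
        (by
          rintro x ⟨y, rfl⟩
          refine ⟨r y, ?_⟩
          have h := LinearMap.congr_fun hcomm y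
          simp only [LinearMap.comp_apply] at h
          simp [LinearMap.sub_apply, h])) := by
  classical
  set N : M →ₗ[K] M := φM - LinearMap.id with hNdef
  set NV : V →ₗ[K] V := φV - LinearMap.id with hNVdef
  -- equivariance pointwise
  have hcomm' : ∀ y : V, r (NV y) = N (r y) := by
    intro y
    have h := LinearMap.congr_fun hcomm y
    simp only [LinearMap.comp_apply] at h
    simp [hNdef, hNVdef, LinearMap.sub_apply, h]
  -- Ker N ∩ Im N = 0
  have hdisj : ∀ m : M, N m = 0 → m ∈ LinearMap.range N → m = 0 := by
    intro m h1 h2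
    have hm : m ∈ LinearMap.ker N := h1
    have : ((LinearMap.range N).mkQ ∘ₗ (LinearMap.ker N).subtype) ⟨m, hm⟩ =
        ((LinearMap.range N).mkQ ∘ₗ (LinearMap.ker N).subtype) 0 := by
      simp [LinearMap.comp_apply, Submodule.Quotient.mk_eq_zero, h2]
    have := hps.injective this
    simpa using congrArg Subtype.val this
  -- the submodule W' = Im N ⊓ Im r
  set W' : Submodule K M := LinearMap.range N ⊓ LinearMap.range r with hW'
  have hstab : ∀ m ∈ W', N m ∈ W' := by
    rintro m ⟨hm1, v, rfl⟩
    exact ⟨LinearMap.mem_range_self N _, ⟨NV v, (hcomm' v)⟩⟩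
  set f : W' →ₗ[K] W' := N.restrict hstab with hf
  have hinj : Function.Injective f := by
    rw [← LinearMap.ker_eq_bot]
    rw [LinearMap.ker_eq_bot']
    intro m hm
    have h0 : N (m : M) = 0 := by
      have := congrArg Subtype.val hm
      simpa [hf, LinearMap.restrict_apply] using this
    exact Subtype.ext (hdisj _ h0 m.2.1)
  have hsurj : Function.Surjective f := (LinearMap.injective_iff_surjective).mp hinj
  -- key: r x ∈ Im N → r x = N (r y) for some y
  have key : ∀ x : V, r x ∈ LinearMap.range N → ∃ y : V, r (NV y) = r x := by
    intro x hx
    have hx' : r x ∈ W' := ⟨hx, LinearMap.mem_range_self r x⟩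
    obtain ⟨w, hw⟩ := hsurj ⟨r x, hx'⟩
    obtain ⟨y, hy⟩ := w.2.2
    refine ⟨y, ?_⟩
    have : N (w : M) = r x := by
      have := congrArg Subtype.val hw
      simpa [hf, LinearMap.restrict_apply] using this
    rw [hcomm' y, hy, this]
  -- conclude
  rw [← LinearMap.ker_eq_bot, LinearMap.ker_eq_bot']
  intro q hq
  obtain ⟨x, rfl⟩ := Submodule.Quotient.mk_surjective _ q
  have hq' : r x ∈ LinearMap.range N := by
    rw [Submodule.mapQ_apply, Submodule.Quotient.mk_eq_zero] at hq
    exact hq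
  obtain ⟨y, hy⟩ := key x hq'
  have hz : r (x - NV y) = 0 := by
    simp [map_sub, hy]
  obtain ⟨z, hz0, hz1⟩ := hker _ hz
  rw [Submodule.Quotient.mk_eq_zero]
  exact ⟨y + z, by rw [map_add, hz1]; abel⟩
end

section
/- Let n ≥ 7 be an integer and let M be the n × n symmetric integer matrix with entries M_{ii} = −1 for all i, M_{ij} = 1 whenever i − j ≡ ±1 (mod n), and M_{ij} = 0 otherwise. Then there exist vectors v, w ∈ Zⁿ such that vᵀMv > 0, wᵀMw > 0 and vᵀMw = 0; consequently the symmetric bilinear form defined by M is positive definite on a 2-dimensional subspace of Qⁿ (in fact one may take v = (1,1,…,1) and w = e₁ + 2e₂ + 2e₃ − e₄ − 2e₅ − 2e₆, where e₁,…,e_n is the standard basis). -/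
open Matrix Finset

/-- The coefficient sequence `1, 2, 2, -1, -2, -2, 0, 0, …`. -/
def acCoef : ℕ → ℤ
  | 0 => 1 | 1 => 2 | 2 => 2 | 3 => -1 | 4 => -2 | 5 => -2 | _ => 0

lemma acCoef_eq_zero {k : ℕ} (hk : 6 ≤ k) : acCoef k = 0 := by
  obtain ⟨m, rfl⟩ : ∃ m, k = m + 6 := ⟨k - 6, by omega⟩
  rfl

/-- The canonical bijection `ZMod n → Fin n`. -/
def acPhi (n : ℕ) [NeZero n] (c : ZMod n) : Fin n := ⟨c.val, ZMod.val_lt c⟩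

lemma coe_acPhi (n : ℕ) [NeZero n] (c : ZMod n) :
    (((acPhi n c : Fin n) : ℕ) : ZMod n) = c := ZMod.natCast_rightInverse c

lemma acPhi_natCast (n : ℕ) [NeZero n] (j : Fin n) :
    acPhi n ((j : ℕ) : ZMod n) = j :=
  Fin.ext (ZMod.val_natCast_of_lt j.isLt)

/-- The cyclic shift `i ↦ i + 1` on `Fin n`. -/
def acShift (n : ℕ) [NeZero n] : Equiv.Perm (Fin n) where
  toFun i := acPhi n (((i : ℕ) : ZMod n) + 1)
  invFun i := acPhi n (((i : ℕ) : ZMod n) - 1)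
  left_inv i := by
    show acPhi n _ = i
    rw [coe_acPhi, add_sub_cancel_right, acPhi_natCast]
  right_inv i := by
    show acPhi n _ = i
    rw [coe_acPhi, sub_add_cancel, acPhi_natCast]

lemma acShift_val (n : ℕ) [NeZero n] (i : Fin n) :
    ((acShift n i : Fin n) : ℕ) = ((i : ℕ) + 1) % n := by
  show ((((i : ℕ) : ZMod n) + 1 : ZMod n)).val = _
  rw [show (((i : ℕ) : ZMod n) + 1) = (((i : ℕ) + 1 : ℕ) : ZMod n) by push_cast; ring,
    ZMod.val_natCast]

lemma ac_sum_coef (n : ℕ) (hn : 7 ≤ n) : ∑ k ∈ range n, acCoef k = 0 := by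
  rw [← Finset.sum_subset (Finset.range_subset_range.2 (by omega : 6 ≤ n))
    (fun k _ hk => acCoef_eq_zero (by simpa using hk))]
  decide

lemma ac_sum_sq (n : ℕ) (hn : 7 ≤ n) : ∑ k ∈ range n, acCoef k * acCoef k = 18 := by
  rw [← Finset.sum_subset (Finset.range_subset_range.2 (by omega : 6 ≤ n))
    (fun k _ hk => by rw [acCoef_eq_zero (by simpa using hk), zero_mul])]
  decide

lemma ac_sum_adj (n : ℕ) (hn : 7 ≤ n) :
    ∑ k ∈ range n, acCoef k * acCoef ((k + 1) % n) = 10 := by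
  rw [← Finset.sum_subset (Finset.range_subset_range.2 (by omega : 6 ≤ n))
    (fun k _ hk => by rw [acCoef_eq_zero (by simpa using hk), zero_mul])]
  have h : ∀ k < 6, (k + 1) % n = k + 1 := fun k hk => Nat.mod_eq_of_lt (by omega)
  rw [Finset.sum_congr rfl (fun k hk => by rw [h k (Finset.mem_range.1 hk)])]
  decide

/-- The vector `(1, 2, 2, -1, -2, -2, 0, …, 0)`. -/
def acW (R : Type*) [CommRing R] (n : ℕ) : Fin n → R := fun j => (acCoef (j : ℕ) : R)

section Generic

variable {R : Type*} [CommRing R] {n : ℕ} [NeZero n] (hn : 7 ≤ n)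
  (M : Matrix (Fin n) (Fin n) R)
  (hM : ∀ i j : Fin n, M i j =
      if i = j then -1
      else if ((i.val : ZMod n) - (j.val : ZMod n) = 1 ∨
               (i.val : ZMod n) - (j.val : ZMod n) = -1) then 1
      else 0)

omit [NeZero n] in
lemma ac_one_ne_zero' (hn : 7 ≤ n) : (1 : ZMod n) ≠ 0 := by
  have : ((1 : ℕ) : ZMod n) ≠ 0 := by
    rw [Ne, ZMod.natCast_eq_zero_iff]
    intro h
    exact absurd (Nat.le_of_dvd one_pos h) (by omega)
  simpa using this

omit [NeZero n] in
lemma ac_two_ne_zero' (hn : 7 ≤ n) : (2 : ZMod n) ≠ 0 := by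
  have : ((2 : ℕ) : ZMod n) ≠ 0 := by
    rw [Ne, ZMod.natCast_eq_zero_iff]
    intro h
    exact absurd (Nat.le_of_dvd two_pos h) (by omega)
  simpa using this

include hn hM

lemma ac_mulVec (x : Fin n → R) (i : Fin n) :
    M.mulVec x i =
      x (acPhi n (((i : ℕ) : ZMod n) - 1)) + x (acPhi n (((i : ℕ) : ZMod n) + 1))
        - x i := by
  set a := acPhi n (((i : ℕ) : ZMod n) - 1) with ha
  set b := acPhi n (((i : ℕ) : ZMod n) + 1) with hb
  have hca : ((a : ℕ) : ZMod n) = ((i : ℕ) : ZMod n) - 1 := coe_acPhi n _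
  have hcb : ((b : ℕ) : ZMod n) = ((i : ℕ) : ZMod n) + 1 := coe_acPhi n _
  have hai : a ≠ i := by
    intro h
    apply ac_one_ne_zero' hn
    have := congrArg (fun x : Fin n => ((x : ℕ) : ZMod n)) h
    simp only [hca] at this
    linear_combination -this
  have hbi : b ≠ i := by
    intro h
    apply ac_one_ne_zero' hn
    have := congrArg (fun x : Fin n => ((x : ℕ) : ZMod n)) h
    simp only [hcb] at this
    linear_combination this
  have hab : a ≠ b := by
    intro h
    apply ac_two_ne_zero' hn
    have := congrArg (fun x : Fin n => ((x : ℕ) : ZMod n)) h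
    simp only [hca, hcb] at this
    linear_combination -this
  have key : ∀ j, M i j * x j =
      (if j = a then x j else 0) + (if j = b then x j else 0)
        - (if j = i then x j else 0) := by
    intro j
    rw [hM i j]
    by_cases hji : j = i
    · subst hji
      rw [if_pos rfl, if_pos rfl, if_neg (Ne.symm hai), if_neg (Ne.symm hbi)]
      ring
    · rw [if_neg (Ne.symm hji), if_neg hji]
      by_cases hja : j = a
      · subst hja
        rw [if_pos rfl, if_neg hab]
        rw [if_pos (Or.inl (by rw [hca]; ring))]
        ring
      · by_cases hjb : j = b
        · subst hjb
          rw [if_neg (Ne.symm hab), if_pos rfl]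
          rw [if_pos (Or.inr (by rw [hcb]; ring))]
          ring
        · rw [if_neg hja, if_neg hjb]
          rw [if_neg, zero_mul]; ring_nf
          rintro (h | h)
          · exact hja (by
              rw [← acPhi_natCast n j, ha]
              congr 1
              linear_combination -h)
          · exact hjb (by
              rw [← acPhi_natCast n j, hb]
              congr 1
              linear_combination -h)
  calc M.mulVec x i = ∑ j, M i j * x j := rfl
    _ = ∑ j, ((if j = a then x j else 0) + (if j = b then x j else 0)
          - (if j = i then x j else 0)) := Finset.sum_congr rfl fun j _ => key j
    _ = x a + x b - x i := by
        rw [Finset.sum_sub_distrib, Finset.sum_add_distrib,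
          Finset.sum_ite_eq' univ a x, Finset.sum_ite_eq' univ b x,
          Finset.sum_ite_eq' univ i x]
        simp

lemma ac_mulVec_one : M.mulVec (fun _ => (1 : R)) = fun _ => 1 := by
  funext i
  rw [ac_mulVec hn M hM]
  ring

omit [NeZero n] hM in
lemma ac_sum_w : ∑ j : Fin n, acW R n j = 0 := by
  rw [show (fun j : Fin n => acW R n j) = fun j : Fin n => ((acCoef (j : ℕ) : R)) from rfl,
    Fin.sum_univ_eq_sum_range (fun k => ((acCoef k : R))) n, ← Int.cast_sum,
    ac_sum_coef n hn, Int.cast_zero]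

lemma ac_vMv : (fun _ => (1 : R)) ⬝ᵥ M.mulVec (fun _ => 1) = (n : R) := by
  rw [ac_mulVec_one hn M hM]
  simp [dotProduct]

lemma ac_wMv : acW R n ⬝ᵥ M.mulVec (fun _ => (1 : R)) = 0 := by
  rw [ac_mulVec_one hn M hM]
  simpa [dotProduct] using ac_sum_w (R := R) hn

lemma ac_vMw : (fun _ => (1 : R)) ⬝ᵥ M.mulVec (acW R n) = 0 := by
  have h : ∀ i, M.mulVec (acW R n) i =
      acW R n ((acShift n).symm i) + acW R n (acShift n i) - acW R n i :=
    fun i => ac_mulVec hn M hM (acW R n) i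
  calc (fun _ => (1 : R)) ⬝ᵥ M.mulVec (acW R n)
      = ∑ i, (acW R n ((acShift n).symm i) + acW R n (acShift n i) - acW R n i) := by
        simp only [dotProduct, one_mul]
        exact Finset.sum_congr rfl fun i _ => h i
    _ = 0 := by
        rw [Finset.sum_sub_distrib, Finset.sum_add_distrib,
          Equiv.sum_comp (acShift n).symm (acW R n),
          Equiv.sum_comp (acShift n) (acW R n), ac_sum_w hn]
        ring

omit [NeZero n] hM in
lemma ac_sum_w_sq : ∑ i : Fin n, acW R n i * acW R n i = (18 : R) := by
  unfold acW
  rw [Fin.sum_univ_eq_sum_range (fun k => ((acCoef k : R) * (acCoef k : R))) n]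
  rw [show (fun k => ((acCoef k : R) * (acCoef k : R)))
      = fun k => (((acCoef k * acCoef k : ℤ)) : R) by funext k; push_cast; ring,
    ← Int.cast_sum, ac_sum_sq n hn]
  norm_num

omit hM in
lemma ac_sum_w_shift : ∑ i : Fin n, acW R n i * acW R n (acShift n i) = (10 : R) := by
  have h : ∀ i : Fin n, acW R n (acShift n i) = (acCoef (((i : ℕ) + 1) % n) : R) := by
    intro i; unfold acW; rw [acShift_val]
  calc ∑ i : Fin n, acW R n i * acW R n (acShift n i)
      = ∑ i : Fin n, ((acCoef (i : ℕ) * acCoef (((i : ℕ) + 1) % n) : ℤ) : R) := by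
        refine Finset.sum_congr rfl fun i _ => ?_
        rw [h i]; unfold acW; push_cast; ring
    _ = (10 : R) := by
        rw [Fin.sum_univ_eq_sum_range
            (fun k => ((acCoef k * acCoef ((k + 1) % n) : ℤ) : R)) n,
          ← Int.cast_sum, ac_sum_adj n hn]
        norm_num

lemma ac_wMw : acW R n ⬝ᵥ M.mulVec (acW R n) = (2 : R) := by
  have h : ∀ i, M.mulVec (acW R n) i =
      acW R n ((acShift n).symm i) + acW R n (acShift n i) - acW R n i :=
    fun i => ac_mulVec hn M hM (acW R n) i
  have hsym : ∑ i : Fin n, acW R n i * acW R n ((acShift n).symm i)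
      = ∑ i : Fin n, acW R n i * acW R n (acShift n i) := by
    have := Equiv.sum_comp (acShift n)
      (fun i => acW R n i * acW R n ((acShift n).symm i))
    simp only [Equiv.symm_apply_apply] at this
    rw [← this]
    exact Finset.sum_congr rfl fun i _ => mul_comm _ _
  calc acW R n ⬝ᵥ M.mulVec (acW R n)
      = ∑ i, acW R n i *
          (acW R n ((acShift n).symm i) + acW R n (acShift n i) - acW R n i) := by
        simp only [dotProduct]
        exact Finset.sum_congr rfl fun i _ => by rw [h i]
    _ = ∑ i, acW R n i * acW R n ((acShift n).symm i)
          + ∑ i, acW R n i * acW R n (acShift n i)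
          - ∑ i, acW R n i * acW R n i := by
        simp only [mul_add, mul_sub]
        rw [Finset.sum_sub_distrib, Finset.sum_add_distrib]
    _ = (2 : R) := by
        rw [hsym, ac_sum_w_shift hn, ac_sum_w_sq hn]
        norm_num

end Generic

/-- Let `n ≥ 7` and let `M` be the `n × n` symmetric integer matrix with `-1` on the
diagonal, `1` in the entries `(i, j)` with `i - j ≡ ±1 (mod n)`, and `0` elsewhere
(the intersection matrix of an anticanonical cycle of length `n` in minus-one-form).
Then there exist integer vectors `v`, `w` with `vᵀMv > 0`, `wᵀMw > 0` and `vᵀMw = 0`;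
consequently the associated bilinear form is positive definite on a `2`-dimensional
subspace of `ℚⁿ`. -/
theorem anticanonical_cycle_matrix_not_hodge
    (n : ℕ) (hn : 7 ≤ n) (M : Matrix (Fin n) (Fin n) ℤ)
    (hM : ∀ i j : Fin n, M i j =
      if i = j then -1
      else if ((i.val : ZMod n) - (j.val : ZMod n) = 1 ∨
               (i.val : ZMod n) - (j.val : ZMod n) = -1) then 1
      else 0) :
    (∃ v w : Fin n → ℤ,
        0 < v ⬝ᵥ M.mulVec v ∧ 0 < w ⬝ᵥ M.mulVec w ∧ v ⬝ᵥ M.mulVec w = 0) ∧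
    ∃ W : Submodule ℚ (Fin n → ℚ), Module.finrank ℚ W = 2 ∧
      ∀ x ∈ W, x ≠ 0 → 0 < x ⬝ᵥ (M.map (Int.cast : ℤ → ℚ)).mulVec x := by
  haveI : NeZero n := ⟨by omega⟩
  constructor
  · refine ⟨fun _ => 1, acW ℤ n, ?_, ?_, ?_⟩
    · rw [ac_vMv hn M hM]; exact_mod_cast (by omega : 0 < n)
    · rw [ac_wMw hn M hM]; norm_num
    · exact ac_vMw hn M hM
  · set M' : Matrix (Fin n) (Fin n) ℚ := M.map (Int.cast : ℤ → ℚ) with hM'def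
    have hM' : ∀ i j : Fin n, M' i j =
        if i = j then -1
        else if ((i.val : ZMod n) - (j.val : ZMod n) = 1 ∨
                 (i.val : ZMod n) - (j.val : ZMod n) = -1) then 1
        else 0 := by
      intro i j
      show ((M i j : ℤ) : ℚ) = _
      rw [hM i j]
      split_ifs <;> norm_num
    set v : Fin n → ℚ := fun _ => 1 with hv
    set w : Fin n → ℚ := acW ℚ n with hw
    have hvv : v ⬝ᵥ M'.mulVec v = (n : ℚ) := ac_vMv hn M' hM'
    have hvw : v ⬝ᵥ M'.mulVec w = 0 := ac_vMw hn M' hM'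
    have hwv : w ⬝ᵥ M'.mulVec v = 0 := ac_wMv hn M' hM'
    have hww : w ⬝ᵥ M'.mulVec w = 2 := ac_wMw hn M' hM'
    have hQ : ∀ a b : ℚ, (a • v + b • w) ⬝ᵥ M'.mulVec (a • v + b • w)
        = a ^ 2 * n + 2 * b ^ 2 := by
      intro a b
      simp only [Matrix.mulVec_add, Matrix.mulVec_smul, add_dotProduct,
        dotProduct_add, smul_dotProduct, dotProduct_smul,
        hvv, hvw, hwv, hww, smul_eq_mul]
      ring
    have hQpos : ∀ a b : ℚ, (a ≠ 0 ∨ b ≠ 0) →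
        0 < (a • v + b • w) ⬝ᵥ M'.mulVec (a • v + b • w) := by
      intro a b hab
      rw [hQ a b]
      have hn' : (7 : ℚ) ≤ (n : ℚ) := by exact_mod_cast hn
      rcases hab with ha | hb
      · nlinarith [sq_nonneg a, sq_nonneg b, sq_pos_of_ne_zero ha]
      · nlinarith [sq_nonneg a, sq_pos_of_ne_zero hb]
    have hzero : ∀ a b : ℚ, a • v + b • w = 0 → a = 0 ∧ b = 0 := by
      intro a b h
      by_contra hc
      push_neg at hc
      have : a ≠ 0 ∨ b ≠ 0 := by tauto
      have := hQpos a b this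
      rw [h] at this
      simp [dotProduct] at this
    have hli : LinearIndependent ℚ ![v, w] := by
      rw [LinearIndependent.pair_iff]
      intro s t hst
      exact hzero s t hst
    refine ⟨Submodule.span ℚ (Set.range ![v, w]), ?_, ?_⟩
    · rw [finrank_span_eq_card hli]
      simp
    · intro x hx hx0
      obtain ⟨c, hc⟩ := (Submodule.mem_span_range_iff_exists_fun ℚ).1 hx
      rw [Fin.sum_univ_two] at hc
      simp only [Matrix.cons_val_zero, Matrix.cons_val_one, Matrix.head_cons] at hc
      have hab : c 0 ≠ 0 ∨ c 1 ≠ 0 := by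
        by_contra hcc
        push_neg at hcc
        apply hx0
        rw [← hc, hcc.1, hcc.2]
        simp
      have := hQpos (c 0) (c 1) hab
      rwa [hc] at this
end
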